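/- arXiv:1908.03760 — 4 statements merged into one kernel-verified Lean document; each statement's English description precedes it below -/
import Mathlib

section
/- Let R be a commutative ring, let A be an n×n matrix, b an n×g matrix, c a g×n matrix, E a g×g matrix over R, and let t ∈ R. Then the (n+2g)×(n+2g) block matrix Z = [[A, b, 0], [c, E, t·I_g], [0, −I_g, 0]] (3×3 block structure with block sizes n, g, g) satisfies det Z = t^g · det A. -/
/-!
Subtracting suitable combinations of the last `g` rows (the rows of `-I_g`) clears the blocks `b`
and `E` without changing the determinant. What remains is block lower triangular with diagonal
blocks `A` and `[[0, t • I_g], [-I_g, 0]]`, and the latter has determinant `t ^ g`.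
-/

open Matrix

namespace Matrix

theorem fromBlocks_fromBlocks_zero_eq_submatrix_sumAssoc {α l m n : Type*} [Zero α]
    (A : Matrix l l α) (C : Matrix m l α) (B : Matrix m n α) (D : Matrix n m α) :
    fromBlocks (fromBlocks A 0 C 0) (fromRows 0 B) (fromCols 0 D) 0 =
      (fromBlocks A 0 (fromRows C 0) (fromBlocks 0 B D 0)).submatrix (Equiv.sumAssoc l m n)
        (Equiv.sumAssoc l m n) := by
  ext ((i | i) | i) ((j | j) | j) <;> simp

variable {R : Type*} [CommRing R] {l m : Type*} [Fintype l] [DecidableEq l] [Fintype m]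
  [DecidableEq m]

theorem det_fromBlocks_zero_neg_one (B : Matrix m m R) :
    (fromBlocks 0 B (-1) 0).det = B.det := by
  have column_ops : (fromBlocks 0 B (-1) 0 : Matrix (m ⊕ m) (m ⊕ m) R) * fromBlocks 1 0 1 1 *
      fromBlocks 1 (-1) 0 1 = fromBlocks B 0 (-1) 1 := by
    simp [fromBlocks_multiply]
  simpa [det_fromBlocks_zero₁₂, det_fromBlocks_zero₂₁] using congrArg det column_ops

theorem det_fromBlocks_fromRows_zero_fromCols_neg_one (A : Matrix l l R) (X : Matrix l m R)
    (Y : Matrix m l R) (W B : Matrix m m R) :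
    (fromBlocks (fromBlocks A X Y W) (fromRows 0 B) (fromCols 0 (-1)) 0).det = A.det * B.det := by
  have clear_X_W :
      fromBlocks (1 : Matrix (l ⊕ m) (l ⊕ m) R) (fromRows X W) 0 (1 : Matrix m m R) *
        fromBlocks (fromBlocks A X Y W) (fromRows 0 B) (fromCols 0 (-1)) 0 =
        fromBlocks (fromBlocks A 0 Y 0) (fromRows 0 B) (fromCols 0 (-1)) 0 := by
    rw [fromBlocks_multiply, fromRows_mul_fromCols]
    simp [fromBlocks_add]
  have hdet := congrArg det clear_X_W
  rw [det_mul, det_fromBlocks_zero₂₁, fromBlocks_fromBlocks_zero_eq_submatrix_sumAssoc,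
    det_submatrix_equiv_self, det_fromBlocks_zero₁₂, det_fromBlocks_zero_neg_one] at hdet
  simpa using hdet

end Matrix

/-- For a commutative ring `R`, an `n×n` matrix `A`, an `n×g` matrix `b`,
a `g×n` matrix `c`, a `g×g` matrix `E` over `R` and `t ∈ R`, the `(n+2g)×(n+2g)` block
matrix `Z = [[A, b, 0], [c, E, t·I_g], [0, −I_g, 0]]` satisfies `det Z = t^g · det A`. -/
theorem block_det_deletion {R : Type*} [CommRing R] (n g : ℕ)
    (A : Matrix (Fin n) (Fin n) R) (b : Matrix (Fin n) (Fin g) R)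
    (c : Matrix (Fin g) (Fin n) R) (E : Matrix (Fin g) (Fin g) R) (t : R)
    (Z : Matrix ((Fin n ⊕ Fin g) ⊕ Fin g) ((Fin n ⊕ Fin g) ⊕ Fin g) R)
    (hZ : Z = Matrix.of fun i j =>
      match i, j with
      | .inl (.inl a), .inl (.inl a') => A a a'
      | .inl (.inl a), .inl (.inr b') => b a b'
      | .inl (.inl _), .inr _ => 0
      | .inl (.inr i), .inl (.inl j) => c i j
      | .inl (.inr i), .inl (.inr j) => E i j
      | .inl (.inr i), .inr j => t * (1 : Matrix (Fin g) (Fin g) R) i j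
      | .inr _, .inl (.inl _) => 0
      | .inr i, .inl (.inr j) => (-(1 : Matrix (Fin g) (Fin g) R)) i j
      | .inr _, .inr _ => 0) :
    Z.det = t ^ g * A.det := by
  have hZ_blocks :
      Z = fromBlocks (fromBlocks A b c E) (fromRows 0 (t • 1)) (fromCols 0 (-1)) 0 := by
    subst hZ
    ext ((i | i) | i) ((j | j) | j) <;> simp
  rw [hZ_blocks, det_fromBlocks_fromRows_zero_fromCols_neg_one, det_smul, det_one,
    Fintype.card_fin, mul_one, mul_comm]
end

section
/- Let R be a commutative ring, V an N×N matrix over R, and w ≥ 1 an integer. Let P be the wN×wN block matrix (w×w blocks of size N×N) with P_{ii} = I_N for all i, P_{i,i−1} = −I_N for 2 ≤ i ≤ w, and all other blocks zero. Then P·S_w(V)·Pᵀ = X, where X is the wN×wN block matrix with X_{11} = V, X_{ii} = V − Vᵀ for 2 ≤ i ≤ w, X_{i,i−1} = −(V − Vᵀ) for 2 ≤ i ≤ w, and all other blocks zero. Moreover det P = 1, so S_w(V) and X are congruent and have equal determinants. -/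
open Matrix

/-- `S_w(V)`: the `wN×wN` block matrix with `(i,j)`-block `V` for `i ≤ j` and `Vᵀ` for `i > j`. -/
def cableS {R : Type*} [CommRing R] {ι : Type*} (w : ℕ) (V : Matrix ι ι R) :
    Matrix (Fin w × ι) (Fin w × ι) R :=
  Matrix.of fun i j => if i.1 ≤ j.1 then V i.2 j.2 else V j.2 i.2

/-- The congruence matrix `P`: identity blocks on the diagonal, `−I_N` on the first
subdiagonal, zero elsewhere. -/
def Pmat (R : Type*) [CommRing R] (N w : ℕ) : Matrix (Fin w × Fin N) (Fin w × Fin N) R :=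
  Matrix.of fun i j =>
    if i.1 = j.1 then (1 : Matrix (Fin N) (Fin N) R) i.2 j.2
    else if (j.1 : ℕ) + 1 = (i.1 : ℕ) then (-(1 : Matrix (Fin N) (Fin N) R)) i.2 j.2
    else 0

/-- The target matrix `X`: `(1,1)`-block `V`, diagonal blocks `V − Vᵀ` afterwards,
first subdiagonal blocks `−(V − Vᵀ)`, zero elsewhere. -/
def Xmat {R : Type*} [CommRing R] {N : ℕ} (w : ℕ) (V : Matrix (Fin N) (Fin N) R) :
    Matrix (Fin w × Fin N) (Fin w × Fin N) R :=
  Matrix.of fun i j =>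
    if i.1 = j.1 then (if (i.1 : ℕ) = 0 then V i.2 j.2 else (V - Vᵀ) i.2 j.2)
    else if (j.1 : ℕ) + 1 = (i.1 : ℕ) then (-(V - Vᵀ)) i.2 j.2
    else 0
/-!
Write `P = D ⊗ I_N`, where `D` is the `w × w` backward-difference matrix, and
`S_w(V) = U ⊗ V + (J - U) ⊗ Vᵀ`, where `U` is the upper triangular all-ones matrix and `J` the
all-ones matrix. Then `P S_w(V) Pᵀ = (D U Dᵀ) ⊗ V + (D J Dᵀ - D U Dᵀ) ⊗ Vᵀ`. Since `D` is the
inverse of `Uᵀ`, `D U Dᵀ = D`, and since the row sums of `D` form the first unit vector `e`,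
`D J Dᵀ = e eᵀ`; this is exactly the block pattern of `X`. Finally `D` is unitriangular.
-/

open scoped Kronecker

theorem Matrix.kronecker_one_mul_kronecker_mul_transpose {R l m n : Type*} [CommSemiring R]
    [Fintype m] [Fintype n] [DecidableEq n] (A : Matrix l m R) (B : Matrix m m R)
    (C : Matrix n n R) :
    A ⊗ₖ (1 : Matrix n n R) * B ⊗ₖ C * (A ⊗ₖ (1 : Matrix n n R))ᵀ = (A * B * Aᵀ) ⊗ₖ C := by
  rw [← kroneckerMap_transpose, transpose_one, ← mul_kronecker_mul, ← mul_kronecker_mul,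
    one_mul, mul_one]

namespace Cable

variable (R : Type*) [CommRing R] (w : ℕ)

def diffMat : Matrix (Fin w) (Fin w) R :=
  of fun i j => if i = j then 1 else if (j : ℕ) + 1 = i then -1 else 0

def upperOnes : Matrix (Fin w) (Fin w) R :=
  of fun k l => if k ≤ l then 1 else 0

def firstUnitVec : Fin w → R :=
  fun i => if (i : ℕ) = 0 then 1 else 0

variable {R w}

theorem diffMat_mulVec_apply (g : Fin w → R) (i : Fin w) :
    (diffMat R w *ᵥ g) i = g i - if (i : ℕ) = 0 then 0 else g ⟨i - 1, by omega⟩ := by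
  by_cases hi : (i : ℕ) = 0
  · rw [if_pos hi, sub_zero, mulVec, dotProduct, Fintype.sum_eq_single i fun k hk => ?_]
    · simp [diffMat]
    · have : (k : ℕ) + 1 ≠ i := by omega
      simp [diffMat, Ne.symm hk, this]
  · rw [if_neg hi, mulVec, dotProduct, Fintype.sum_eq_add i ⟨i - 1, by omega⟩
      (by simp [Fin.ext_iff]; omega) fun k hk => ?_]
    · have hne : (i : ℕ) ≠ i - 1 := by omega
      have hsucc : (i : ℕ) - 1 + 1 = i := by omega
      simp [diffMat, Fin.ext_iff, hne, hsucc, sub_eq_add_neg]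
    · obtain ⟨hki, hkp⟩ := hk
      have : (k : ℕ) + 1 ≠ i := fun h => hkp (Fin.ext (by simp only; omega))
      simp [diffMat, Ne.symm hki, this]

theorem diffMat_mulVec_one : diffMat R w *ᵥ 1 = firstUnitVec R w := by
  ext i
  rw [diffMat_mulVec_apply, firstUnitVec]
  split_ifs <;> simp

theorem diffMat_mul_upperOnes_transpose : diffMat R w * (upperOnes R w)ᵀ = 1 := by
  ext i j
  change (diffMat R w *ᵥ fun k => upperOnes R w j k) i = _
  simp only [diffMat_mulVec_apply, upperOnes, of_apply, one_apply, Fin.le_def, Fin.ext_iff]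
  split_ifs <;> first | (exfalso; omega) | simp

theorem diffMat_mul_upperOnes_mul_transpose :
    diffMat R w * upperOnes R w * (diffMat R w)ᵀ = diffMat R w := by
  rw [mul_assoc, ← transpose_transpose (upperOnes R w), ← transpose_mul,
    diffMat_mul_upperOnes_transpose, transpose_one, mul_one]

theorem diffMat_mul_vecMulVec_one_mul_transpose :
    diffMat R w * vecMulVec 1 1 * (diffMat R w)ᵀ =
      vecMulVec (firstUnitVec R w) (firstUnitVec R w) := by
  rw [mul_vecMulVec, vecMulVec_mul, vecMul_transpose, diffMat_mulVec_one]

theorem det_diffMat : (diffMat R w).det = 1 := by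
  rw [det_of_isLowerTriangular _ fun i j hij => ?_]
  · simp [diffMat]
  · have : i < j := hij
    simp only [diffMat, of_apply, Fin.ext_iff]
    split_ifs <;> first | rfl | (exfalso; omega)

theorem Pmat_eq_kronecker (N : ℕ) : Pmat R N w = diffMat R w ⊗ₖ 1 := by
  ext ⟨i, a⟩ ⟨j, b⟩
  simp only [Pmat, diffMat, of_apply, kronecker_apply]
  split_ifs <;> simp

theorem cableS_eq_kronecker {ι : Type*} (V : Matrix ι ι R) :
    cableS w V = upperOnes R w ⊗ₖ V + (vecMulVec 1 1 - upperOnes R w) ⊗ₖ Vᵀ := by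
  ext ⟨i, a⟩ ⟨j, b⟩
  simp only [cableS, upperOnes, of_apply, Matrix.add_apply, kronecker_apply, Matrix.sub_apply,
    vecMulVec_apply]
  split_ifs <;> simp

theorem Xmat_eq_kronecker {N : ℕ} (V : Matrix (Fin N) (Fin N) R) :
    Xmat w V = diffMat R w ⊗ₖ V
      + (vecMulVec (firstUnitVec R w) (firstUnitVec R w) - diffMat R w) ⊗ₖ Vᵀ := by
  ext ⟨i, a⟩ ⟨j, b⟩
  simp only [Xmat, diffMat, firstUnitVec, of_apply, Matrix.add_apply, kronecker_apply,
    Matrix.sub_apply, vecMulVec_apply, Matrix.neg_apply, transpose_apply, Fin.ext_iff]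
  split_ifs <;> first | (exfalso; omega) | ring

end Cable

open Cable in
theorem cableS_congruent_to_Xmat_general {R : Type*} [CommRing R] (N w : ℕ)
    (V : Matrix (Fin N) (Fin N) R) :
    Pmat R N w * cableS w V * (Pmat R N w)ᵀ = Xmat w V ∧ (Pmat R N w).det = 1 := by
  rw [Pmat_eq_kronecker, det_kronecker, det_diffMat, det_one, one_pow, one_pow, mul_one]
  refine ⟨?_, rfl⟩
  rw [cableS_eq_kronecker, mul_add, add_mul, kronecker_one_mul_kronecker_mul_transpose,
    kronecker_one_mul_kronecker_mul_transpose, mul_sub, sub_mul,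
    diffMat_mul_upperOnes_mul_transpose, diffMat_mul_vecMulVec_one_mul_transpose,
    Xmat_eq_kronecker]

/-- `P·S_w(V)·Pᵀ = X` and `det P = 1`; in particular `S_w(V)` and `X` are
congruent and have equal determinants. -/
theorem cableS_congruent_to_Xmat {R : Type*} [CommRing R] (N w : ℕ) (hw : 1 ≤ w)
    (V : Matrix (Fin N) (Fin N) R) :
    Pmat R N w * cableS w V * (Pmat R N w)ᵀ = Xmat w V ∧ (Pmat R N w).det = 1 :=
  cableS_congruent_to_Xmat_general N w V
end

section
/- Let R be a commutative ring, V an N×N matrix over R, and w ≥ 1 an integer. Then det S_w(V) = det V · (det(V − Vᵀ))^{w−1}. -/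
/-!
Let `U` be the upper triangular all-ones `w × w` matrix and `J` the all-ones matrix. Then
`S_w(V) = U ⊗ (V - Vᵀ) + J ⊗ Vᵀ`, and `J = U E` where `E` has ones in its last row and zeros
elsewhere, so `S_w(V) = (U ⊗ 1) (1 ⊗ (V - Vᵀ) + E ⊗ Vᵀ)`. The first factor has determinant `1`;
the second is block lower triangular, with diagonal blocks `V - Vᵀ` (`w - 1` times) and `V`.
-/

open Matrix Kronecker OrderDual

namespace Matrix

variable {R ι : Type*}

def upperOnes (α : Type*) [LinearOrder α] [Zero R] [One R] : Matrix α α R :=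
  of fun i j => if i ≤ j then 1 else 0

def lastRowOnes (n : ℕ) [Zero R] [One R] : Matrix (Fin (n + 1)) (Fin (n + 1)) R :=
  of fun i _ => if i = Fin.last n then 1 else 0

theorem det_upperOnes {α : Type*} [CommRing R] [LinearOrder α] [Fintype α] :
    (upperOnes α : Matrix α α R).det = 1 := by
  rw [det_of_isUpperTriangular]
  · simp [upperOnes]
  · intro i j hji
    exact if_neg hji.not_ge

theorem upperOnes_mul_lastRowOnes [NonAssocSemiring R] (n : ℕ) :
    upperOnes (Fin (n + 1)) * lastRowOnes n = of fun _ _ => (1 : R) := by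
  ext i j
  simp [mul_apply, upperOnes, lastRowOnes, Fin.le_last]

theorem BlockTriangular.det_eq_prod_det_submatrix_mk {α : Type*} [CommRing R] [Fintype ι]
    [DecidableEq ι] [LinearOrder α] [Fintype α] {M : Matrix (α × ι) (α × ι) R}
    (h : M.BlockTriangular fun p => toDual p.1) :
    M.det = ∏ k : α, (M.submatrix (Prod.mk k) (Prod.mk k)).det := by
  rw [h.det_fintype]
  refine Fintype.prod_equiv ofDual _ _ fun k => ?_
  let e : { p : α × ι // toDual p.1 = k } ≃ ι :=
    ⟨fun p => p.1.2, fun i => ⟨(ofDual k, i), rfl⟩, fun ⟨⟨_, _⟩, hp⟩ => by subst hp; rfl,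
      fun _ => rfl⟩
  have he : ∀ p, (ofDual k, e p) = p.1 := fun p => Prod.ext (congrArg ofDual p.2.symm) rfl
  rw [← det_submatrix_equiv_self e]
  congr 1
  ext p q
  exact (congr_arg₂ M (he p) (he q)).symm

theorem det_one_kronecker_add_lastRowOnes_kronecker [CommRing R] [Fintype ι] [DecidableEq ι]
    (n : ℕ) (A B : Matrix ι ι R) :
    (1 ⊗ₖ A + lastRowOnes n ⊗ₖ B).det = A.det ^ n * (A + B).det := by
  have hM : (1 ⊗ₖ A + lastRowOnes n ⊗ₖ B).BlockTriangular fun p => toDual p.1 := by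
    rintro ⟨i, a⟩ ⟨j, b⟩ (hij : i < j)
    simp [lastRowOnes, hij.ne, (hij.trans_le (Fin.le_last j)).ne]
  have hblock : ∀ k, (1 ⊗ₖ A + lastRowOnes n ⊗ₖ B).submatrix (Prod.mk k) (Prod.mk k) =
      A + if k = Fin.last n then B else 0 := by
    intro k
    ext a b
    by_cases hk : k = Fin.last n <;> simp [lastRowOnes, hk]
  simp [hM.det_eq_prod_det_submatrix_mk, Fin.prod_univ_castSucc, hblock, Fin.castSucc_ne_last]

end Matrix

theorem cableS_eq_kronecker {R ι : Type*} [CommRing R] (w : ℕ) (V : Matrix ι ι R) :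
    cableS w V = upperOnes (Fin w) ⊗ₖ (V - Vᵀ) + (of fun _ _ => 1) ⊗ₖ Vᵀ := by
  ext ⟨i, a⟩ ⟨j, b⟩
  by_cases hij : i ≤ j <;> simp [cableS, upperOnes, hij]

theorem cableS_succ_eq_mul {R ι : Type*} [CommRing R] [Fintype ι] [DecidableEq ι] (n : ℕ)
    (V : Matrix ι ι R) :
    cableS (n + 1) V = (upperOnes _ ⊗ₖ 1) * (1 ⊗ₖ (V - Vᵀ) + lastRowOnes n ⊗ₖ Vᵀ) := by
  rw [mul_add, ← mul_kronecker_mul, ← mul_kronecker_mul, mul_one, one_mul, one_mul,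
    upperOnes_mul_lastRowOnes, cableS_eq_kronecker]

/-- `det S_w(V) = det V · (det(V − Vᵀ))^{w−1}`. -/
theorem det_cableS {R : Type*} [CommRing R] (N w : ℕ) (hw : 1 ≤ w)
    (V : Matrix (Fin N) (Fin N) R) :
    (cableS w V).det = V.det * ((V - Vᵀ).det) ^ (w - 1) := by
  obtain ⟨n, rfl⟩ := Nat.exists_eq_add_of_le' hw
  rw [cableS_succ_eq_mul, det_mul, det_kronecker, det_upperOnes,
    det_one_kronecker_add_lastRowOnes_kronecker, sub_add_cancel]
  simp [mul_comm]
end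

section
/- Let V be a 2n×2n integer matrix with det(V − Vᵀ) = 1, and let w ≥ 1 be an integer. Then, as polynomials in ℤ[t], det(t·S_w(V) − S_w(V)ᵀ) = det(t^w·V − Vᵀ). (Here t·S_w(V) − S_w(V)ᵀ is a 2nw×2nw matrix over ℤ[t], and t^w·V − Vᵀ is a 2n×2n matrix over ℤ[t].) -/
/-!
Write `t • S_w(V) - S_w(V)ᵀ = A ⊗ V + B ⊗ Vᵀ` for explicit `w × w` coefficient matrices `A`, `B`.
With `Z` the subdiagonal shift, one checks `(1 - Z) B = -(1 - t Z)` and `(1 - Z) A = C (1 - t Z)`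
for an upper triangular `C` with diagonal `(t ^ w, 1, …, 1)`. Since `1 - Z` and `1 - t Z` are
unipotent, the pencil has the determinant of `C ⊗ V - 1 ⊗ Vᵀ`, which is block upper triangular:
`det (t ^ w • V - Vᵀ) * det (V - Vᵀ) ^ (w - 1)`.
-/

open Matrix Polynomial

open scoped Kronecker

namespace Matrix

variable {m n R : Type*} [CommRing R] [Fintype m] [LinearOrder m] [Fintype n] [DecidableEq n]

theorem det_comp_of_isUpperTriangular (M : Matrix m m (Matrix n n R))
    (hM : M.IsUpperTriangular) : (M.comp m m n n R).det = ∏ i, (M i i).det := by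
  rw [hM.comp.det_fintype]
  refine Finset.prod_congr rfl fun i _ => ?_
  rw [comp_toSquareBlock, det_reindex_self]
  let _ : Unique {a // id a = i} := ⟨⟨⟨i, rfl⟩⟩, fun a => Subtype.ext a.2⟩
  rw [← det_reindex_self (Equiv.uniqueProd n _)]
  congr 1

theorem det_kronecker_add_kronecker_of_isUpperTriangular {A B : Matrix m m R}
    (hA : A.IsUpperTriangular) (hB : B.IsUpperTriangular) (V W : Matrix n n R) :
    (A ⊗ₖ V + B ⊗ₖ W).det = ∏ i, (A i i • V + B i i • W).det := by
  have hcomp : A ⊗ₖ V + B ⊗ₖ W = comp m m n n R (of fun i j => A i j • V + B i j • W) := by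
    ext ⟨i, x⟩ ⟨j, y⟩
    simp
  rw [hcomp, det_comp_of_isUpperTriangular]
  · rfl
  · intro i j hij
    simp [hA hij, hB hij]

end Matrix

theorem cableS_map {R S ι : Type*} [CommRing R] [CommRing S] (w : ℕ) (V : Matrix ι ι R)
    (f : R → S) : (cableS w V).map f = cableS w (V.map f) := by
  ext i j
  simp only [cableS, map_apply, of_apply]
  split_ifs <;> rfl

namespace Cable

variable {R : Type*} [CommRing R] (w : ℕ) (t : R)

def coeffV : Matrix (Fin w) (Fin w) R :=
  of fun i j => if i = j then t else if i < j then t - 1 else 0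

def coeffVT : Matrix (Fin w) (Fin w) R :=
  of fun i j => if i = j then -1 else if j < i then t - 1 else 0

theorem smul_cableS_sub_transpose {ι : Type*} (V : Matrix ι ι R) :
    t • cableS w V - (cableS w V)ᵀ = coeffV w t ⊗ₖ V + coeffVT w t ⊗ₖ Vᵀ := by
  ext ⟨i, x⟩ ⟨j, y⟩
  rcases lt_trichotomy i j with hij | rfl | hij
  · simp [cableS, coeffV, coeffVT, hij, hij.le, hij.ne, hij.not_ge, hij.not_gt]
    ring
  · simp [cableS, coeffV, coeffVT, sub_eq_add_neg]
  · simp [cableS, coeffV, coeffVT, hij, hij.le, hij.ne', hij.not_ge, hij.not_gt]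
    ring

variable (R) in
def subShift : Matrix (Fin w) (Fin w) R :=
  of fun i j => if (i : ℕ) = j + 1 then 1 else 0

def triangularCoeffV : Matrix (Fin w) (Fin w) R :=
  of fun i j => if (i : ℕ) = 0 then t ^ (w - j) - (if (j : ℕ) = 0 then 0 else 1)
    else if i = j then 1 else 0

variable {w}

theorem subShift_mul_apply (M : Matrix (Fin w) (Fin w) R) (i j : Fin w) :
    (subShift R w * M) i j = if h : (i : ℕ) = 0 then 0 else M ⟨i - 1, by omega⟩ j := by
  rw [mul_apply]
  split_ifs with h
  · refine Finset.sum_eq_zero fun k _ => ?_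
    simp [subShift, h]
  · rw [Finset.sum_eq_single ⟨i - 1, by omega⟩]
    · simp [subShift]
      omega
    · intro k _ hk
      simp [subShift, Fin.ext_iff] at hk ⊢
      omega
    · simp

theorem mul_subShift_apply (M : Matrix (Fin w) (Fin w) R) (i j : Fin w) :
    (M * subShift R w) i j = if h : (j : ℕ) + 1 < w then M i ⟨j + 1, h⟩ else 0 := by
  rw [mul_apply]
  split_ifs with h
  · rw [Finset.sum_eq_single ⟨j + 1, h⟩]
    · simp [subShift]
    · intro k _ hk
      simp [subShift, Fin.ext_iff] at hk ⊢
      omega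
    · simp
  · refine Finset.sum_eq_zero fun k _ => ?_
    simp [subShift]
    omega

theorem one_sub_subShift_mul_coeffVT :
    (1 - subShift R w) * coeffVT w t = -(1 - t • subShift R w) := by
  ext i j
  simp only [Matrix.sub_mul, Matrix.one_mul, Matrix.sub_apply, Matrix.neg_apply,
    Matrix.smul_apply, subShift_mul_apply]
  simp only [coeffVT, subShift, one_apply, of_apply, Fin.ext_iff, Fin.lt_def, smul_eq_mul]
  split_ifs <;> first | omega | ring1

theorem one_sub_subShift_mul_coeffV :
    (1 - subShift R w) * coeffV w t = triangularCoeffV w t * (1 - t • subShift R w) := by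
  ext i j
  simp only [Matrix.sub_mul, Matrix.mul_sub, Matrix.one_mul, Matrix.mul_one, Matrix.mul_smul,
    Matrix.sub_apply, Matrix.smul_apply, subShift_mul_apply, mul_subShift_apply]
  simp only [coeffV, triangularCoeffV, of_apply, Fin.ext_iff, Fin.lt_def, Nat.add_one_ne_zero,
    reduceIte]
  rw [show w - (j : ℕ) = w - (j + 1) + 1 by omega]
  split_ifs <;> first | omega | ring1 | (rw [Nat.sub_eq_zero_of_le (by omega)]; ring1)

theorem det_one_sub_smul_subShift (c : R) : (1 - c • subShift R w).det = 1 := by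
  rw [det_of_isLowerTriangular]
  · simp [subShift]
  · intro i j (hij : (i : ℕ) < j)
    simp [subShift, Fin.ext_iff, hij.ne]
    omega

theorem triangularCoeffV_isUpperTriangular : (triangularCoeffV w t).IsUpperTriangular := by
  intro i j (hij : j < i)
  simp [triangularCoeffV, hij.ne']
  omega

end Cable

open Cable in
theorem det_smul_cableS_sub_transpose {R ι : Type*} [CommRing R] [Fintype ι] [DecidableEq ι]
    (t : R) (V : Matrix ι ι R) (w : ℕ) :
    (t • cableS (w + 1) V - (cableS (w + 1) V)ᵀ).det
      = (t ^ (w + 1) • V - Vᵀ).det * (V - Vᵀ).det ^ w := by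
  have hreduce : ((1 - subShift R (w + 1)) ⊗ₖ 1) *
        (coeffV (w + 1) t ⊗ₖ V + coeffVT (w + 1) t ⊗ₖ Vᵀ)
      = (triangularCoeffV (w + 1) t ⊗ₖ V + (-1) ⊗ₖ Vᵀ) *
        ((1 - t • subShift R (w + 1)) ⊗ₖ 1) := by
    simp only [Matrix.mul_add, Matrix.add_mul, ← mul_kronecker_mul, Matrix.one_mul,
      Matrix.mul_one, Matrix.neg_mul, one_sub_subShift_mul_coeffV, one_sub_subShift_mul_coeffVT]
  have hP : (1 - subShift R (w + 1)).det = 1 := by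
    simpa using det_one_sub_smul_subShift (w := w + 1) (1 : R)
  have hdet := congrArg det hreduce
  rw [det_mul, det_mul, det_kronecker, det_kronecker, hP, det_one_sub_smul_subShift] at hdet
  simp only [det_one, one_pow, one_mul, mul_one] at hdet
  rw [smul_cableS_sub_transpose, hdet, det_kronecker_add_kronecker_of_isUpperTriangular
    (triangularCoeffV_isUpperTriangular t) blockTriangular_one.neg, Fin.prod_univ_succ]
  simp [triangularCoeffV, sub_eq_add_neg]

theorem alexander_poly_of_cable_general (n w : ℕ)
    (V : Matrix (Fin (2 * n)) (Fin (2 * n)) ℤ) (h : (V - Vᵀ).det = 1) :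
    ((X : ℤ[X]) • (cableS w V).map (fun a : ℤ => (a : ℤ[X]))
        - ((cableS w V)ᵀ).map (fun a : ℤ => (a : ℤ[X]))).det
      = (((X : ℤ[X]) ^ w) • V.map (fun a : ℤ => (a : ℤ[X]))
        - Vᵀ.map (fun a : ℤ => (a : ℤ[X]))).det := by
  rw [transpose_map, transpose_map, cableS_map]
  set W := V.map (fun a : ℤ => (a : ℤ[X]))
  have hW : (W - Wᵀ).det = 1 := by
    have hcast : W - Wᵀ = (Int.castRingHom ℤ[X]).mapMatrix (V - Vᵀ) := by
      ext
      simp [W]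
    rw [hcast, ← RingHom.map_det, h, map_one]
  cases w with
  | zero => simp [hW]
  | succ m => rw [det_smul_cableS_sub_transpose, hW, one_pow, mul_one]

/-- for a `2n×2n` integer matrix `V` with `det(V − Vᵀ) = 1` and `w ≥ 1`,
`det(t·S_w(V) − S_w(V)ᵀ) = det(t^w·V − Vᵀ)` in `ℤ[t]`. -/
theorem alexander_poly_of_cable (n w : ℕ) (hw : 1 ≤ w)
    (V : Matrix (Fin (2 * n)) (Fin (2 * n)) ℤ) (h : (V - Vᵀ).det = 1) :
    ((X : ℤ[X]) • (cableS w V).map (fun a : ℤ => (a : ℤ[X]))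
        - ((cableS w V)ᵀ).map (fun a : ℤ => (a : ℤ[X]))).det
      = (((X : ℤ[X]) ^ w) • V.map (fun a : ℤ => (a : ℤ[X]))
        - Vᵀ.map (fun a : ℤ => (a : ℤ[X]))).det :=
  alexander_poly_of_cable_general n w V h
end
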